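/- There exists a constant λ₀ ≥ 0, depending only on the coefficients, such that for every λ ≥ λ₀ and every continuous 1-periodic ψ = (ψ_1,…,ψ_𝚖) : ℝ^d → ℝ^𝚖, classical solutions of the perturbed system are unique: if u and w both have C² 1-periodic components and satisfy λ u_α(x) − L_α u_α(x) − (Qu)(x,α) = ψ_α(x) and λ w_α(x) − L_α w_α(x) − (Qw)(x,α) = ψ_α(x) for all x ∈ ℝ^d and α ∈ 𝕀, then u = w. -/

import Mathlib

open MeasureTheory Matrix Finset

noncomputable section

/-- Partial derivative `∂f/∂x_j` of a function on `ℝ^d`. -/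
def pd {d : ℕ} (f : (Fin d → ℝ) → ℝ) (j : Fin d) (x : Fin d → ℝ) : ℝ :=
  fderiv ℝ f x (Pi.single j 1)

/-- Second partial derivative `∂²f/∂x_j∂x_k`. -/
def pd2 {d : ℕ} (f : (Fin d → ℝ) → ℝ) (j k : Fin d) (x : Fin d → ℝ) : ℝ :=
  pd (fun y => pd f j y) k x

/-- `1`-periodicity of a function on `ℝ^d`. -/
def Per {d : ℕ} (f : (Fin d → ℝ) → ℝ) : Prop :=
  ∀ (x : Fin d → ℝ) (ν : Fin d → ℤ), f (x + fun i => (ν i : ℝ)) = f x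

/-- Integral over the fundamental domain `[0,1)^d` of the torus `𝕋^d`. -/
def tInt {d : ℕ} (f : (Fin d → ℝ) → ℝ) : ℝ :=
  ∫ x in Set.pi Set.univ (fun _ : Fin d => Set.Ico (0:ℝ) 1), f x

/-- Diffusion matrix `a(x,α) = σ(x,α) σ(x,α)ᵀ`. -/
def diffMat {d r m : ℕ} (σ : (Fin d → ℝ) → Fin m → Matrix (Fin d) (Fin r) ℝ)
    (x : Fin d → ℝ) (α : Fin m) : Matrix (Fin d) (Fin d) ℝ :=
  σ x α * (σ x α)ᵀ

/-- The jump part `Qf(x,α) = ∑_{β ≠ α} q_{αβ}(x) [f(x,β) - f(x,α)]` of the generator. -/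
def jumpOp {d m : ℕ} (q : Fin m → Fin m → (Fin d → ℝ) → ℝ)
    (f : (Fin d → ℝ) → Fin m → ℝ) (x : Fin d → ℝ) (α : Fin m) : ℝ :=
  ∑ β ∈ Finset.univ.filter (fun β => β ≠ α), q α β x * (f x β - f x α)

/-- The generator `ℒ` of the switching diffusion. -/
def gen {d m : ℕ} (b : (Fin d → ℝ) → Fin m → Fin d → ℝ)
    (a : (Fin d → ℝ) → Fin m → Matrix (Fin d) (Fin d) ℝ)
    (q : Fin m → Fin m → (Fin d → ℝ) → ℝ)
    (f : (Fin d → ℝ) → Fin m → ℝ) (x : Fin d → ℝ) (α : Fin m) : ℝ :=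
  (∑ j, b x α j * pd (fun y => f y α) j x)
    + (1/2) * ∑ j, ∑ k, a x α j k * pd2 (fun y => f y α) j k x
    + jumpOp q f x α

/-- The formal `L²`-adjoint `ℒ*`; its jump part uses the transposed intensity matrix and
includes the diagonal term. -/
def genAdj {d m : ℕ} (b : (Fin d → ℝ) → Fin m → Fin d → ℝ)
    (a : (Fin d → ℝ) → Fin m → Matrix (Fin d) (Fin d) ℝ)
    (q : Fin m → Fin m → (Fin d → ℝ) → ℝ)
    (g : (Fin d → ℝ) → Fin m → ℝ) (x : Fin d → ℝ) (α : Fin m) : ℝ :=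
  -(∑ j, pd (fun y => b y α j * g y α) j x)
    + (1/2) * ∑ j, ∑ k, pd2 (fun y => a y α j k * g y α) j k x
    + ∑ β, q β α x * g x β

/-- The diffusion part `L_α u_α` of the generator. -/
def diffOp {d r m : ℕ} (b : (Fin d → ℝ) → Fin m → Fin d → ℝ)
    (σ : (Fin d → ℝ) → Fin m → Matrix (Fin d) (Fin r) ℝ)
    (u : (Fin d → ℝ) → Fin m → ℝ) (x : Fin d → ℝ) (α : Fin m) : ℝ :=
  ∑ j, b x α j * pd (fun y => u y α) j x
    + (1/2) * ∑ j, ∑ k, diffMat σ x α j k * pd2 (fun y => u y α) j k x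

/-- Apply a continuous linear map to a vector via the basis decomposition. -/
lemma clm_apply_eq_sum {d : ℕ} (L : (Fin d → ℝ) →L[ℝ] ℝ) (ξ : Fin d → ℝ) :
    L ξ = ∑ j, ξ j * L (Pi.single j 1) := by
  have h : ξ = ∑ j, (ξ j) • (Pi.single j 1 : Fin d → ℝ) := by
    have := Finset.univ_sum_single ξ
    rw [← this]
    refine Finset.sum_congr rfl fun j _ => ?_
    funext i
    by_cases hij : i = j <;> simp [Pi.single_apply, hij]
  conv_lhs => rw [h]
  rw [map_sum]
  refine Finset.sum_congr rfl fun j _ => ?_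
  rw [ContinuousLinearMap.map_smul, smul_eq_mul]

/-- At a global maximum of a differentiable function on `ℝ`, the second
derivative is nonpositive. -/
lemma second_deriv_nonpos_of_max {g G : ℝ → ℝ} {S : ℝ}
    (hg : ∀ t, HasDerivAt g (G t) t) (hG : HasDerivAt G S 0)
    (hmax : ∀ t, g t ≤ g 0) : S ≤ 0 := by
  by_contra hS
  push_neg at hS
  have hG0 : G 0 = 0 := by
    have h1 : deriv g 0 = G 0 := (hg 0).deriv
    have h2 : IsLocalMax g 0 := Filter.Eventually.of_forall hmax
    rw [← h1]
    exact h2.deriv_eq_zero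
  have hslope : Filter.Tendsto (slope G 0) (nhdsWithin 0 {(0:ℝ)}ᶜ) (nhds S) :=
    hasDerivAt_iff_tendsto_slope.mp hG
  have hev : ∀ᶠ t in nhdsWithin 0 {(0:ℝ)}ᶜ, 0 < slope G 0 t :=
    hslope.eventually (eventually_gt_nhds hS)
  rw [eventually_nhdsWithin_iff, Metric.eventually_nhds_iff] at hev
  obtain ⟨δ, hδ, hball⟩ := hev
  have hpos : ∀ t, 0 < t → t < δ → 0 < G t := by
    intro t ht htδ
    have h1 : 0 < slope G 0 t := by
      apply hball (by simpa [Real.dist_eq, abs_of_pos ht] using htδ)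
      simpa using ht.ne'
    rw [slope_def_field] at h1
    rw [hG0, sub_zero, sub_zero, div_pos_iff] at h1
    rcases h1 with ⟨h, _⟩ | ⟨_, h⟩
    · exact h
    · linarith
  have hcont : Continuous g := by
    rw [continuous_iff_continuousAt]
    exact fun t => (hg t).continuousAt
  have hmono : StrictMonoOn g (Set.Icc 0 (δ/2)) := by
    apply strictMonoOn_of_deriv_pos (convex_Icc 0 (δ/2)) hcont.continuousOn
    intro t ht
    rw [interior_Icc] at ht
    rw [(hg t).deriv]
    exact hpos t ht.1 (by linarith [ht.2])
  have hlt : g 0 < g (δ/2) :=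
    hmono (Set.left_mem_Icc.mpr (by linarith)) (Set.right_mem_Icc.mpr (by linarith)) (by linarith)
  exact absurd (hmax (δ/2)) (not_le.mpr hlt)

/-- At a global maximum of a `C²` function the Hessian quadratic form is nonpositive. -/
lemma quad_form_nonpos {d : ℕ} {f : (Fin d → ℝ) → ℝ} (hf : ContDiff ℝ 2 f)
    {x₀ : Fin d → ℝ} (hmax : ∀ x, f x ≤ f x₀) (ξ : Fin d → ℝ) :
    ∑ j, ∑ k, ξ j * ξ k * pd2 f j k x₀ ≤ 0 := by
  have hfd : Differentiable ℝ f := hf.differentiable (by norm_num)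
  have hpdc : ∀ j, ContDiff ℝ 1 (fun y => pd f j y) := by
    intro j
    exact (hf.fderiv_right (by norm_num)).clm_apply contDiff_const
  have hpdd : ∀ j, Differentiable ℝ (fun y => pd f j y) :=
    fun j => (hpdc j).differentiable (by norm_num)
  set L : ℝ → (Fin d → ℝ) := fun t => x₀ + t • ξ with hLdef
  have hL0 : L 0 = x₀ := by simp [hLdef]
  have hLd : ∀ t, HasDerivAt L ξ t := by
    intro t
    have h1 : HasDerivAt (fun s : ℝ => s • ξ) ((1:ℝ) • ξ) t :=
      (hasDerivAt_id t).smul_const ξ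
    exact (show HasDerivAt (fun s : ℝ => s • ξ) ξ t by simpa using h1).const_add x₀
  set g : ℝ → ℝ := fun t => f (L t) with hgdef
  set G : ℝ → ℝ := fun t => (fderiv ℝ f (L t)) ξ with hGdef
  have hg : ∀ t, HasDerivAt g (G t) t := fun t =>
    ((hfd (L t)).hasFDerivAt).comp_hasDerivAt t (hLd t)
  have hGeq : G = fun t => ∑ j, ξ j * pd f j (L t) := by
    funext t
    exact clm_apply_eq_sum _ ξ
  have hG : HasDerivAt G (∑ j, ξ j * ((fderiv ℝ (fun y => pd f j y) x₀) ξ)) 0 := by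
    rw [hGeq]
    apply HasDerivAt.fun_sum
    intro j _
    have h1 : HasDerivAt (fun t => pd f j (L t)) ((fderiv ℝ (fun y => pd f j y) (L 0)) ξ) 0 :=
      ((hpdd j (L 0)).hasFDerivAt).comp_hasDerivAt 0 (hLd 0)
    rw [hL0] at h1
    exact h1.const_mul (ξ j)
  have hmax' : ∀ t, g t ≤ g 0 := by
    intro t
    simp only [hgdef, hL0]
    exact hmax (L t)
  have hS := second_deriv_nonpos_of_max hg hG hmax'
  have hrw : ∑ j, ξ j * ((fderiv ℝ (fun y => pd f j y) x₀) ξ)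
      = ∑ j, ∑ k, ξ j * ξ k * pd2 f j k x₀ := by
    refine Finset.sum_congr rfl fun j _ => ?_
    rw [clm_apply_eq_sum _ ξ, Finset.mul_sum]
    refine Finset.sum_congr rfl fun k _ => ?_
    rw [← mul_assoc]
    rfl
  rwa [hrw] at hS

/-- Maximum principle for the perturbed system. -/
lemma max_principle {d r m : ℕ} (hm : 0 < m)
    (b : (Fin d → ℝ) → Fin m → Fin d → ℝ)
    (σ : (Fin d → ℝ) → Fin m → Matrix (Fin d) (Fin r) ℝ)
    (q : Fin m → Fin m → (Fin d → ℝ) → ℝ)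
    (hq_nonneg : ∀ α β, α ≠ β → ∀ x, 0 ≤ q α β x)
    (lam : ℝ) (hlam : 1 ≤ lam)
    (v : (Fin d → ℝ) → Fin m → ℝ)
    (hv : ∀ α, ContDiff ℝ 2 fun x => v x α)
    (hv_per : ∀ α, Per fun x => v x α)
    (heq : ∀ x α, lam * v x α = diffOp b σ v x α + jumpOp q v x α) :
    ∀ x α, v x α ≤ 0 := by
  set K : Set (Fin d → ℝ) := Set.Icc 0 1 with hKdef
  have hKc : IsCompact K := isCompact_Icc
  have hKne : K.Nonempty := ⟨0, by simp [hKdef]⟩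
  have hmaxα : ∀ α : Fin m, ∃ x ∈ K, ∀ y ∈ K, v y α ≤ v x α := by
    intro α
    obtain ⟨x, hxK, hx⟩ := hKc.exists_isMaxOn hKne ((hv α).continuous.continuousOn)
    exact ⟨x, hxK, fun y hy => hx hy⟩
  choose xm hxmK hxm using hmaxα
  obtain ⟨α₀, -, hα₀⟩ := Finset.exists_max_image Finset.univ (fun α => v (xm α) α)
    ⟨⟨0, hm⟩, Finset.mem_univ _⟩
  set x₀ := xm α₀ with hx₀def
  have hglob : ∀ (x : Fin d → ℝ) (α : Fin m), v x α ≤ v x₀ α₀ := by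
    intro x α
    have hy : (fun i => Int.fract (x i)) ∈ K := by
      rw [hKdef, Set.mem_Icc]
      constructor <;> intro i
      · exact Int.fract_nonneg _
      · exact (Int.fract_lt_one _).le
    have hxeq : ((fun i => Int.fract (x i)) + fun i => ((⌊x i⌋ : ℤ) : ℝ)) = x := by
      funext i
      exact Int.fract_add_floor (x i)
    have hper : v x α = v (fun i => Int.fract (x i)) α := by
      conv_lhs => rw [← hxeq]
      exact hv_per α (fun i => Int.fract (x i)) (fun i => ⌊x i⌋)
    calc v x α = v (fun i => Int.fract (x i)) α := hper
      _ ≤ v (xm α) α := hxm α _ hy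
      _ ≤ v x₀ α₀ := hα₀ α (Finset.mem_univ _)
  have hM : v x₀ α₀ ≤ 0 := by
    have hmaxf : ∀ x, v x α₀ ≤ v x₀ α₀ := fun x => hglob x α₀
    have hloc : IsLocalMax (fun x => v x α₀) x₀ := Filter.Eventually.of_forall hmaxf
    have hfz : fderiv ℝ (fun x => v x α₀) x₀ = 0 := hloc.fderiv_eq_zero
    have hpd0 : ∀ j, pd (fun y => v y α₀) j x₀ = 0 := by
      intro j
      unfold pd
      rw [hfz]
      simp
    have hdiff : diffOp b σ v x₀ α₀ ≤ 0 := by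
      unfold diffOp
      have h1 : ∑ j, b x₀ α₀ j * pd (fun y => v y α₀) j x₀ = 0 := by
        simp [hpd0]
      have h2 : ∑ j, ∑ k, diffMat σ x₀ α₀ j k * pd2 (fun y => v y α₀) j k x₀ ≤ 0 := by
        have hsplit : ∑ j, ∑ k, diffMat σ x₀ α₀ j k * pd2 (fun y => v y α₀) j k x₀
            = ∑ l : Fin r, ∑ j, ∑ k,
              (σ x₀ α₀ j l) * (σ x₀ α₀ k l) * pd2 (fun y => v y α₀) j k x₀ := by
          calc ∑ j, ∑ k, diffMat σ x₀ α₀ j k * pd2 (fun y => v y α₀) j k x₀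
              = ∑ j, ∑ k, ∑ l : Fin r,
                (σ x₀ α₀ j l) * (σ x₀ α₀ k l) * pd2 (fun y => v y α₀) j k x₀ := by
                refine Finset.sum_congr rfl fun j _ => Finset.sum_congr rfl fun k _ => ?_
                simp only [diffMat, Matrix.mul_apply, Matrix.transpose_apply, Finset.sum_mul]
            _ = ∑ j, ∑ l : Fin r, ∑ k,
                (σ x₀ α₀ j l) * (σ x₀ α₀ k l) * pd2 (fun y => v y α₀) j k x₀ :=
                Finset.sum_congr rfl fun j _ => Finset.sum_comm
            _ = ∑ l : Fin r, ∑ j, ∑ k,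
                (σ x₀ α₀ j l) * (σ x₀ α₀ k l) * pd2 (fun y => v y α₀) j k x₀ :=
                Finset.sum_comm
        rw [hsplit]
        apply Finset.sum_nonpos
        intro l _
        exact quad_form_nonpos (hv α₀) hmaxf (fun j => σ x₀ α₀ j l)
      linarith
    have hjump : jumpOp q v x₀ α₀ ≤ 0 := by
      unfold jumpOp
      apply Finset.sum_nonpos
      intro β hβ
      rw [Finset.mem_filter] at hβ
      exact mul_nonpos_of_nonneg_of_nonpos (hq_nonneg α₀ β (Ne.symm hβ.2) x₀)
        (sub_nonpos.mpr (hglob x₀ β))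
    have hle : lam * v x₀ α₀ ≤ 0 := by
      rw [heq x₀ α₀]
      linarith
    by_contra h
    push_neg at h
    have : 1 * v x₀ α₀ ≤ lam * v x₀ α₀ := mul_le_mul_of_nonneg_right hlam h.le
    linarith
  exact fun x α => (hglob x α).trans hM

/-- `diffOp` is linear: it maps differences to differences. -/
lemma diffOp_sub {d r m : ℕ} (b : (Fin d → ℝ) → Fin m → Fin d → ℝ)
    (σ : (Fin d → ℝ) → Fin m → Matrix (Fin d) (Fin r) ℝ)
    (u w : (Fin d → ℝ) → Fin m → ℝ)
    (hu : ∀ α, ContDiff ℝ 2 fun x => u x α) (hw : ∀ α, ContDiff ℝ 2 fun x => w x α)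
    (x : Fin d → ℝ) (α : Fin m) :
    diffOp b σ (fun y β => u y β - w y β) x α = diffOp b σ u x α - diffOp b σ w x α := by
  have hud : Differentiable ℝ (fun y => u y α) := (hu α).differentiable (by norm_num)
  have hwd : Differentiable ℝ (fun y => w y α) := (hw α).differentiable (by norm_num)
  have hupd : ∀ j, Differentiable ℝ (fun y => pd (fun z => u z α) j y) := fun j =>
    (((hu α).fderiv_right (m := 1) (by norm_num)).clm_apply contDiff_const).differentiable (by norm_num)
  have hwpd : ∀ j, Differentiable ℝ (fun y => pd (fun z => w z α) j y) := fun j =>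
    (((hw α).fderiv_right (m := 1) (by norm_num)).clm_apply contDiff_const).differentiable (by norm_num)
  have hpd : ∀ j y, pd (fun z => u z α - w z α) j y
      = pd (fun z => u z α) j y - pd (fun z => w z α) j y := by
    intro j y
    unfold pd
    rw [fderiv_fun_sub (hud y) (hwd y)]
    simp
  have hpd2 : ∀ j k, pd2 (fun z => u z α - w z α) j k x
      = pd2 (fun z => u z α) j k x - pd2 (fun z => w z α) j k x := by
    intro j k
    unfold pd2
    have heq2 : (fun y => pd (fun z => u z α - w z α) j y)
        = fun y => pd (fun z => u z α) j y - pd (fun z => w z α) j y :=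
      funext (hpd j)
    rw [heq2]
    show (fderiv ℝ (fun y => pd (fun z => u z α) j y - pd (fun z => w z α) j y) x) (Pi.single k 1)
      = (fderiv ℝ (fun y => pd (fun z => u z α) j y) x) (Pi.single k 1)
        - (fderiv ℝ (fun y => pd (fun z => w z α) j y) x) (Pi.single k 1)
    rw [fderiv_fun_sub (hupd j x) (hwpd j x)]
    simp
  unfold diffOp
  simp only [hpd, hpd2, mul_sub, Finset.sum_sub_distrib, mul_add]
  ring

/-- `jumpOp` is linear: it maps differences to differences. -/
lemma jumpOp_sub {d m : ℕ} (q : Fin m → Fin m → (Fin d → ℝ) → ℝ)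
    (u w : (Fin d → ℝ) → Fin m → ℝ) (x : Fin d → ℝ) (α : Fin m) :
    jumpOp q (fun y β => u y β - w y β) x α = jumpOp q u x α - jumpOp q w x α := by
  unfold jumpOp
  rw [← Finset.sum_sub_distrib]
  exact Finset.sum_congr rfl fun β _ => by ring

/-- uniqueness of classical `1`-periodic solutions of the perturbed
system `λu - Lu - Qu = ψ` for `λ ≥ λ₀`. -/
theorem perturbed_system_uniqueness
    {d r m : ℕ} (hd : 0 < d) (hr : 0 < r) (hm : 0 < m)
    (b : (Fin d → ℝ) → Fin m → Fin d → ℝ)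
    (σ : (Fin d → ℝ) → Fin m → Matrix (Fin d) (Fin r) ℝ)
    (q : Fin m → Fin m → (Fin d → ℝ) → ℝ)
    (amin qbar : ℝ) (hamin : 0 < amin)
    (hb : ∀ α j, ContDiff ℝ (⊤ : ℕ∞) fun x => b x α j)
    (hσ : ∀ α i j, ContDiff ℝ (⊤ : ℕ∞) fun x => σ x α i j)
    (hell : ∀ (x ξ : Fin d → ℝ) (α : Fin m),
      amin * ∑ i, ξ i ^ 2 ≤ ξ ⬝ᵥ (diffMat σ x α *ᵥ ξ))
    (hq_smooth : ∀ α β, α ≠ β → ContDiff ℝ (⊤ : ℕ∞) (q α β))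
    (hq_nonneg : ∀ α β, α ≠ β → ∀ x, 0 ≤ q α β x)
    (hq_bdd : ∀ α β, α ≠ β → ∀ x, q α β x ≤ qbar)
    (hq_diag : ∀ α x, q α α x = -∑ β ∈ Finset.univ.filter (fun β => β ≠ α), q α β x)
    (hq_irred : ∀ (x : Fin d → ℝ) (B : Set (Fin m)), B.Nonempty → Bᶜ.Nonempty →
      ∃ α ∈ B, ∃ β ∈ Bᶜ, q α β x ≠ 0)
    (hb_per : ∀ α j, Per fun x => b x α j)
    (hσ_per : ∀ α i j, Per fun x => σ x α i j)
    (hq_per : ∀ α β, Per (q α β))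
 :
    ∃ lam0 ≥ (0:ℝ), ∀ lam ≥ lam0,
      ∀ ψ u w : (Fin d → ℝ) → Fin m → ℝ,
        (∀ α, Continuous fun x => ψ x α) → (∀ α, Per fun x => ψ x α) →
        (∀ α, ContDiff ℝ 2 fun x => u x α) → (∀ α, Per fun x => u x α) →
        (∀ α, ContDiff ℝ 2 fun x => w x α) → (∀ α, Per fun x => w x α) →
        (∀ x α, lam * u x α - diffOp b σ u x α - jumpOp q u x α = ψ x α) →
        (∀ x α, lam * w x α - diffOp b σ w x α - jumpOp q w x α = ψ x α) →
        u = w := by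
  refine ⟨1, zero_le_one, ?_⟩
  intro lam hlam ψ u w hψc hψp hu hup hw hwp hueq hweq
  have key : ∀ (p s : (Fin d → ℝ) → Fin m → ℝ),
      (∀ α, ContDiff ℝ 2 fun x => p x α) → (∀ α, Per fun x => p x α) →
      (∀ α, ContDiff ℝ 2 fun x => s x α) → (∀ α, Per fun x => s x α) →
      (∀ x α, lam * p x α - diffOp b σ p x α - jumpOp q p x α = ψ x α) →
      (∀ x α, lam * s x α - diffOp b σ s x α - jumpOp q s x α = ψ x α) →
      ∀ x α, p x α ≤ s x α := by
    intro p s hp hpp hs hsp hpe hse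
    have hvC : ∀ α, ContDiff ℝ 2 fun x => p x α - s x α := fun α => (hp α).sub (hs α)
    have hvP : ∀ α, Per fun x => p x α - s x α := by
      intro α x ν
      have h1 : p (x + fun i => ((ν i : ℤ) : ℝ)) α = p x α := hpp α x ν
      have h2 : s (x + fun i => ((ν i : ℤ) : ℝ)) α = s x α := hsp α x ν
      show p _ α - s _ α = p x α - s x α
      rw [h1, h2]
    have heqv : ∀ x α, lam * (p x α - s x α)
        = diffOp b σ (fun y β => p y β - s y β) x α
          + jumpOp q (fun y β => p y β - s y β) x α := by
      intro x α
      have h1 := hpe x α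
      have h2 := hse x α
      rw [diffOp_sub b σ p s hp hs x α, jumpOp_sub q p s x α, mul_sub]
      linarith
    intro x α
    have := max_principle hm b σ q hq_nonneg lam hlam
      (fun y β => p y β - s y β) hvC hvP heqv x α
    linarith
  funext x α
  exact le_antisymm (key u w hu hup hw hwp hueq hweq x α)
    (key w u hw hwp hu hup hweq hueq x α)
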